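/- arXiv:1509.02897 — 2 statements merged into one kernel-verified Lean document; each statement's English description precedes it below -/
import Mathlib

section
/- There is a universal constant c > 0 with the following property. Let K ⊆ ℝ² be the complement of an open convex subset of the plane that is symmetric about the origin, and let Δ_K = inf{r > 0 : μ_K(r) > 0}, where μ_K(r) = μ(K ∩ rS¹)/(2πr) with μ the arc-length measure. Then for every 0 < ε < 1/3: c · ε^{1/2} · e^{−(1+ε)·Δ_K²/2} ≤ 𝒢(K) ≤ e^{−Δ_K²/2}, where 𝒢 is the standard Gaussian measure on ℝ². -/
open MeasureTheory ProbabilityTheory Real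

noncomputable section

/-- The standard Gaussian measure `𝒢` on `ℝ²` (product of two standard Gaussians). -/
def gauss2 : Measure (ℝ × ℝ) := (gaussianReal 0 1).prod (gaussianReal 0 1)

/-- `μ_A(r)`: the normalized arc-length measure of `A ∩ rS¹`, i.e. the fraction of the circle
of radius `r` centered at the origin lying in `A`. -/
def circFrac (A : Set (ℝ × ℝ)) (r : ℝ) : ℝ :=
  (volume {θ : ℝ | θ ∈ Set.Ico 0 (2 * π) ∧ (r * Real.cos θ, r * Real.sin θ) ∈ A}).toReal
    / (2 * π)

/-- The set `{r > 0 : μ_A(r) > 0}` whose infimum is the essential distance `Δ_A`. -/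
def essDistSet (A : Set (ℝ × ℝ)) : Set ℝ := {r : ℝ | 0 < r ∧ 0 < circFrac A r}

/-- `e^{-c·Δ_A²}` expressed as `sup {e^{-c·r²} : r ∈ {r > 0 : μ_A(r) > 0}}`; this agrees with
`exp (-c * (inf {r > 0 : μ_A(r) > 0})²)` whenever the set is nonempty, and is `0` (the value
corresponding to `Δ_A = ∞`) when the set is empty. -/
def expNegDistSq (A : Set (ℝ × ℝ)) (c : ℝ) : ℝ :=
  sSup ((fun r => Real.exp (-(c * r ^ 2))) '' essDistSet A)

open Set Filter Topology

/-! If `Δ² = inf_{p ∈ K} |p|²`, then `K` misses the open disc of radius `Δ`, so polar coordinates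
give `𝒢(K) ≤ 𝒢{|p| ≥ Δ} = e^{-Δ²/2}`. Conversely, `0 ∈ U` by symmetry and convexity, and
Hahn–Banach separates any `y ∈ K` from `U` by a half-plane `{⟨u, p⟩ ≥ s} ⊆ K` with `0 ≤ s ≤ |y|`.
By rotation invariance its measure is the one-dimensional tail `P(X ≥ s) ≥ √ε φ(s + √ε)`, and
`(s + √ε)² ≤ (1 + ε)(s² + 1)`. The same half-planes meet every circle of radius `r > Δ` in an arc
of positive length, so `Δ` is also the essential distance. -/

lemma gaussianPDFReal_mul_gaussianPDFReal (u v : ℝ) :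
    gaussianPDFReal 0 1 u * gaussianPDFReal 0 1 v = (2 * π)⁻¹ * exp (-(u ^ 2 + v ^ 2) / 2) := by
  have hsq : (2 * π)⁻¹ = (√(2 * π))⁻¹ * (√(2 * π))⁻¹ := by
    rw [← mul_inv, Real.mul_self_sqrt (by positivity)]
  simp only [gaussianPDFReal, NNReal.coe_one, mul_one, sub_zero]
  rw [hsq, show -(u ^ 2 + v ^ 2) / 2 = -u ^ 2 / 2 + -v ^ 2 / 2 by ring, exp_add]
  ring

lemma gauss2_eq_withDensity :
    gauss2 = volume.withDensity
      fun p => ENNReal.ofReal ((2 * π)⁻¹ * exp (-(p.1 ^ 2 + p.2 ^ 2) / 2)) := by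
  rw [gauss2, gaussianReal_of_var_ne_zero _ one_ne_zero,
    prod_withDensity (measurable_gaussianPDF 0 1) (measurable_gaussianPDF 0 1),
    ← Measure.volume_eq_prod]
  simp only [gaussianPDF, ← ENNReal.ofReal_mul (gaussianPDFReal_nonneg _ _ _),
    gaussianPDFReal_mul_gaussianPDFReal]

lemma measureReal_gauss2 (S : Set (ℝ × ℝ)) :
    gauss2.real S = ∫ p in S, (2 * π)⁻¹ * exp (-(p.1 ^ 2 + p.2 ^ 2) / 2) := by
  have := setIntegral_withDensity_eq_setIntegral_toReal_smul' (μ := volume) S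
    (f := fun p : ℝ × ℝ => ENNReal.ofReal ((2 * π)⁻¹ * exp (-(p.1 ^ 2 + p.2 ^ 2) / 2)))
    (by fun_prop) (ae_of_all _ fun _ => ENNReal.ofReal_lt_top) (fun _ => (1 : ℝ))
  rw [← gauss2_eq_withDensity, setIntegral_const, smul_eq_mul, mul_one] at this
  simp only [this, smul_eq_mul, mul_one]
  exact integral_congr_ae (ae_of_all _ fun p => ENNReal.toReal_ofReal (by positivity))

lemma integral_comp_sq_add_sq (h : ℝ → ℝ) :
    ∫ p : ℝ × ℝ, h (p.1 ^ 2 + p.2 ^ 2) = 2 * π * ∫ r in Ioi 0, r * h (r ^ 2) := by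
  rw [← integral_comp_polarCoord_symm, polarCoord_target, Measure.volume_eq_prod,
    ← Measure.prod_restrict]
  have hpolar : ∀ p : ℝ × ℝ, p.1 • h ((polarCoord.symm p).1 ^ 2 + (polarCoord.symm p).2 ^ 2)
      = p.1 * h (p.1 ^ 2) * 1 := by
    rintro ⟨r, θ⟩
    simp only [polarCoord_symm_apply, smul_eq_mul, mul_one]
    congr 2
    linear_combination r ^ 2 * sin_sq_add_cos_sq θ
  simp_rw [hpolar]
  rw [integral_prod_mul (fun r => r * h (r ^ 2)) (fun _ => (1 : ℝ)), integral_const,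
    measureReal_restrict_apply_univ, Real.volume_real_Ioo_of_le (by linarith [pi_pos])]
  simp only [smul_eq_mul, mul_one]
  ring

lemma integral_Ioi_mul_exp_neg_sq_div_two (a : ℝ) :
    ∫ r in Ioi a, r * exp (-r ^ 2 / 2) = exp (-a ^ 2 / 2) := by
  have hderiv (x : ℝ) : HasDerivAt (fun r => -exp (-r ^ 2 / 2)) (x * exp (-x ^ 2 / 2)) x := by
    refine ((hasDerivAt_pow 2 x).neg.div_const 2).exp.neg.congr_deriv ?_
    simp only [Pi.neg_apply, Nat.cast_ofNat]
    ring
  have hlim : Tendsto (fun r : ℝ => -exp (-r ^ 2 / 2)) atTop (𝓝 0) := by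
    have : Tendsto (fun r : ℝ => r ^ 2 / 2) atTop atTop :=
      (tendsto_pow_atTop two_ne_zero).atTop_div_const two_pos
    simpa [neg_div] using (tendsto_exp_neg_atTop_nhds_zero.comp this).neg
  have hint : Integrable fun r : ℝ => r * exp (-r ^ 2 / 2) := by
    simpa [div_eq_inv_mul, neg_mul] using integrable_mul_exp_neg_mul_sq (b := 1 / 2) (by norm_num)
  rw [integral_Ioi_of_hasDerivAt_of_tendsto' (fun x _ => hderiv x) hint.integrableOn hlim]
  ring

lemma measureReal_gauss2_setOf_le_sq_add_sq {t : ℝ} (ht : 0 ≤ t) :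
    gauss2.real {p | t ≤ p.1 ^ 2 + p.2 ^ 2} = exp (-t / 2) := by
  set h := (Ici t).indicator fun u => (2 * π)⁻¹ * exp (-u / 2)
  have hS : MeasurableSet {p : ℝ × ℝ | t ≤ p.1 ^ 2 + p.2 ^ 2} := by measurability
  have hradial : ∀ r ∈ Ioi (0 : ℝ),
      r * h (r ^ 2) = (Ici √t).indicator (fun r => (2 * π)⁻¹ * (r * exp (-r ^ 2 / 2))) r := by
    intro r hr
    simp only [h, indicator, mem_Ici, Real.sqrt_le_left (le_of_lt hr)]
    split_ifs <;> ring
  have hae : (Ioi 0 ∩ Ici √t : Set ℝ) =ᵐ[volume] Ioi √t :=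
    (Ioi_ae_eq_Ici.inter (ae_eq_refl _)).trans <| by
      rw [Ici_inter_Ici, max_eq_right (Real.sqrt_nonneg t)]
      exact Ioi_ae_eq_Ici.symm
  rw [measureReal_gauss2, ← integral_indicator hS]
  change ∫ p : ℝ × ℝ, h (p.1 ^ 2 + p.2 ^ 2) = _
  rw [integral_comp_sq_add_sq, setIntegral_congr_fun measurableSet_Ioi hradial,
    setIntegral_indicator measurableSet_Ici, setIntegral_congr_set hae, integral_const_mul,
    integral_Ioi_mul_exp_neg_sq_div_two, Real.sq_sqrt ht]
  field_simp

lemma gauss2_map_linear {a b : ℝ} (hab : a ^ 2 + b ^ 2 = 1) :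
    gauss2.map (fun p => a * p.1 + b * p.2) = gaussianReal 0 1 := by
  have hmul (c : ℝ) : Measurable (c * · : ℝ → ℝ) := measurable_const_mul c
  rw [show (fun p : ℝ × ℝ => a * p.1 + b * p.2)
      = (fun q : ℝ × ℝ => q.1 + q.2) ∘ Prod.map (a * ·) (b * ·) from rfl,
    ← Measure.map_map measurable_add ((hmul a).prodMap (hmul b)), gauss2,
    ← Measure.map_prod_map _ _ (hmul a) (hmul b), gaussianReal_map_const_mul,
    gaussianReal_map_const_mul]
  change Measure.conv _ _ = _
  rw [gaussianReal_conv_gaussianReal]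
  congr 1
  · ring
  · ext
    simpa using hab

lemma gauss2_setOf_le_linear {a b : ℝ} (hab : a ^ 2 + b ^ 2 = 1) (s : ℝ) :
    gauss2 {p | s ≤ a * p.1 + b * p.2} = gaussianReal 0 1 (Ici s) := by
  rw [← gauss2_map_linear hab, Measure.map_apply (by fun_prop) measurableSet_Ici]
  rfl

lemma gaussianPDFReal_antitoneOn : AntitoneOn (gaussianPDFReal 0 1) (Ici 0) := by
  intro x hx y _ hxy
  simp only [gaussianPDFReal, NNReal.coe_one, mul_one, sub_zero]
  gcongr

lemma mul_gaussianPDFReal_le_measureReal_Ici {s δ : ℝ} (hs : 0 ≤ s) (hδ : 0 ≤ δ) :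
    δ * gaussianPDFReal 0 1 (s + δ) ≤ (gaussianReal 0 1).real (Ici s) := by
  have hφ := integrable_gaussianPDFReal 0 1
  rw [measureReal_def, gaussianReal_apply_eq_integral 0 one_ne_zero, ENNReal.toReal_ofReal
    (setIntegral_nonneg measurableSet_Ici fun x _ => gaussianPDFReal_nonneg 0 1 x)]
  calc δ * gaussianPDFReal 0 1 (s + δ) = ∫ _ in Ioc s (s + δ), gaussianPDFReal 0 1 (s + δ) := by
        simp [Real.volume_real_Ioc_of_le (le_add_of_nonneg_right hδ)]
    _ ≤ ∫ x in Ioc s (s + δ), gaussianPDFReal 0 1 x :=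
        setIntegral_mono_on (integrableOn_const measure_Ioc_lt_top.ne) hφ.integrableOn
          measurableSet_Ioc fun x hx => gaussianPDFReal_antitoneOn
            (hs.trans hx.1.le) (hs.trans (le_add_of_nonneg_right hδ)) hx.2
    _ ≤ ∫ x in Ici s, gaussianPDFReal 0 1 x :=
        setIntegral_mono_set hφ.integrableOn (ae_of_all _ (gaussianPDFReal_nonneg 0 1))
          (Eventually.of_forall fun x hx => hx.1.le)

lemma exp_mul_exp_le_exp_neg_add_sqrt_sq (s : ℝ) {ε : ℝ} (hε : 0 ≤ ε) :
    exp (-(1 + ε) / 2) * exp (-((1 + ε) / 2 * s ^ 2)) ≤ exp (-(s + √ε) ^ 2 / 2) := by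
  rw [← exp_add, exp_le_exp]
  nlinarith [sq_nonneg (√ε * s - 1), Real.sq_sqrt hε]

lemma le_measureReal_gaussianReal_Ici {s ε : ℝ} (hs : 0 ≤ s) (hε : 0 ≤ ε) :
    √ε * exp (-(1 + ε) / 2) / √(2 * π) * exp (-((1 + ε) / 2 * s ^ 2))
      ≤ (gaussianReal 0 1).real (Ici s) := by
  calc √ε * exp (-(1 + ε) / 2) / √(2 * π) * exp (-((1 + ε) / 2 * s ^ 2))
      = √ε * ((√(2 * π))⁻¹ * (exp (-(1 + ε) / 2) * exp (-((1 + ε) / 2 * s ^ 2)))) := by ring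
    _ ≤ √ε * gaussianPDFReal 0 1 (s + √ε) := by
        simp only [gaussianPDFReal, NNReal.coe_one, mul_one, sub_zero]
        gcongr
        exact exp_mul_exp_le_exp_neg_add_sqrt_sq s hε
    _ ≤ (gaussianReal 0 1).real (Ici s) :=
        mul_gaussianPDFReal_le_measureReal_Ici hs (Real.sqrt_nonneg ε)

instance : IsProbabilityMeasure gauss2 := by
  unfold gauss2
  infer_instance

lemma exists_halfPlane_subset_compl {U : Set (ℝ × ℝ)} (hUo : IsOpen U) (hUc : Convex ℝ U)
    (hUs : ∀ x ∈ U, -x ∈ U) {y : ℝ × ℝ} (hy : y ∉ U) :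
    ∃ a b s : ℝ, a ^ 2 + b ^ 2 = 1 ∧ 0 ≤ s ∧ s ^ 2 ≤ y.1 ^ 2 + y.2 ^ 2 ∧
      {p | s ≤ a * p.1 + b * p.2} ⊆ Uᶜ := by
  rcases U.eq_empty_or_nonempty with rfl | ⟨x, hx⟩
  · exact ⟨1, 0, 0, by norm_num, le_rfl, by rw [zero_pow two_ne_zero]; positivity, fun _ _ => id⟩
  have h0 : (0 : ℝ × ℝ) ∈ U := by
    simpa using hUc hx (hUs x hx) (by norm_num : (0 : ℝ) ≤ 1 / 2) (by norm_num : (0 : ℝ) ≤ 1 / 2)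
      (by norm_num)
  obtain ⟨f, hf⟩ := geometric_hahn_banach_open_point hUc hUo hy
  set α := f (1, 0)
  set β := f (0, 1)
  have hf_apply (p : ℝ × ℝ) : f p = α * p.1 + β * p.2 := by
    conv_lhs => rw [show p = p.1 • ((1 : ℝ), (0 : ℝ)) + p.2 • ((0 : ℝ), (1 : ℝ)) by ext <;> simp]
    rw [map_add, map_smul, map_smul, smul_eq_mul, smul_eq_mul, mul_comm, mul_comm p.2]
  have hfy : 0 < f y := by simpa using hf 0 h0
  have hCS : f y ^ 2 ≤ (α ^ 2 + β ^ 2) * (y.1 ^ 2 + y.2 ^ 2) := by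
    rw [hf_apply]
    nlinarith [sq_nonneg (α * y.2 - β * y.1)]
  have hαβ : 0 < α ^ 2 + β ^ 2 := by nlinarith [sq_nonneg y.1, sq_nonneg y.2]
  have hρ : 0 < √(α ^ 2 + β ^ 2) := Real.sqrt_pos.2 hαβ
  refine ⟨α / √(α ^ 2 + β ^ 2), β / √(α ^ 2 + β ^ 2), f y / √(α ^ 2 + β ^ 2), ?_, by positivity,
    ?_, fun p hp hpU => ?_⟩
  · rw [div_pow, div_pow, ← add_div, Real.sq_sqrt hαβ.le, div_self hαβ.ne']
  · rw [div_pow, Real.sq_sqrt hαβ.le, div_le_iff₀ hαβ]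
    linarith
  · have hp' : f y ≤ f p := by
      refine (div_le_div_iff_of_pos_right hρ).1 ?_
      rw [hf_apply p, add_div, mul_div_right_comm, mul_div_right_comm β]
      exact hp
    linarith [hf p hpU]

lemma exists_mem_Ioc_cos_eq_sin_eq {a b : ℝ} (hab : a ^ 2 + b ^ 2 = 1) :
    ∃ θ ∈ Ioc 0 (2 * π), cos θ = a ∧ sin θ = b := by
  set z : ℂ := ⟨a, b⟩
  have hz : ‖z‖ = 1 := by
    rw [Complex.norm_def, Complex.normSq_mk, ← sq, ← sq, hab, Real.sqrt_one]
  have hz0 : z ≠ 0 := norm_ne_zero_iff.1 (hz ▸ one_ne_zero)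
  have hcos : cos z.arg = a := by rw [Complex.cos_arg hz0, hz, div_one]
  have hsin : sin z.arg = b := by rw [Complex.sin_arg, hz, div_one]
  rcases lt_or_ge 0 z.arg with h | h
  · exact ⟨z.arg, ⟨h, by linarith [Complex.arg_le_pi z, pi_pos]⟩, hcos, hsin⟩
  · refine ⟨z.arg + 2 * π, ⟨by linarith [Complex.neg_pi_lt_arg z], by linarith⟩, ?_, ?_⟩
    · rwa [cos_add_two_pi]
    · rwa [sin_add_two_pi]

lemma circFrac_pos_of_halfPlane_subset {A : Set (ℝ × ℝ)} {a b s r : ℝ}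
    (hab : a ^ 2 + b ^ 2 = 1) (hsr : s < r) (hsub : {p | s ≤ a * p.1 + b * p.2} ⊆ A) :
    0 < circFrac A r := by
  obtain ⟨θ₀, hθ₀, hcos, hsin⟩ := exists_mem_Ioc_cos_eq_sin_eq hab
  set W := {θ : ℝ | s < a * (r * cos θ) + b * (r * sin θ)}
  have hWo : IsOpen W := isOpen_lt continuous_const (by fun_prop)
  have hθ₀W : θ₀ ∈ W := by
    have : a * (r * cos θ₀) + b * (r * sin θ₀) = r := by
      rw [hcos, hsin]
      linear_combination r * hab
    show s < _
    linarith
  have hsubset : W ∩ Ioo 0 θ₀ ⊆ {θ | θ ∈ Ico 0 (2 * π) ∧ (r * cos θ, r * sin θ) ∈ A} :=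
    fun θ ⟨hθW, hθ⟩ => ⟨⟨hθ.1.le, hθ.2.trans_le hθ₀.2⟩, hsub (le_of_lt (α := ℝ) hθW)⟩
  have hne : (W ∩ Ioo 0 θ₀).Nonempty :=
    nonempty_of_mem (inter_mem (mem_nhdsWithin_of_mem_nhds (hWo.mem_nhds hθ₀W))
      (Ioo_mem_nhdsLT hθ₀.1))
  refine div_pos (ENNReal.toReal_pos ?_ ?_) (by positivity)
  · exact (((hWo.inter isOpen_Ioo).measure_pos volume hne).trans_le (measure_mono hsubset)).ne'
  · exact measure_ne_top_of_subset (fun θ hθ => hθ.1) measure_Ico_lt_top.ne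

lemma exists_mem_sq_add_sq_eq_of_circFrac_pos {A : Set (ℝ × ℝ)} {r : ℝ}
    (h : 0 < circFrac A r) : ∃ p ∈ A, p.1 ^ 2 + p.2 ^ 2 = r ^ 2 := by
  by_contra! hA
  have : {θ | θ ∈ Ico 0 (2 * π) ∧ (r * cos θ, r * sin θ) ∈ A} = ∅ :=
    eq_empty_of_forall_notMem fun θ hθ =>
      hA _ hθ.2 (by linear_combination r ^ 2 * sin_sq_add_cos_sq θ)
  rw [circFrac, this] at h
  simp at h

lemma expNegDistSq_le {A : Set (ℝ × ℝ)} {c b : ℝ} (hb : 0 ≤ b)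
    (h : ∀ p ∈ A, exp (-(c * (p.1 ^ 2 + p.2 ^ 2))) ≤ b) : expNegDistSq A c ≤ b := by
  refine Real.sSup_le ?_ hb
  rintro _ ⟨r, ⟨-, hr⟩, rfl⟩
  obtain ⟨p, hp, hpr⟩ := exists_mem_sq_add_sq_eq_of_circFrac_pos hr
  show exp (-(c * r ^ 2)) ≤ b
  rw [← hpr]
  exact h p hp

lemma exp_le_expNegDistSq {A : Set (ℝ × ℝ)} {c D : ℝ} (hc : 0 ≤ c) (hD : 0 ≤ D)
    (h : ∀ r, 0 < r → D < r ^ 2 → r ∈ essDistSet A) : exp (-(c * D)) ≤ expNegDistSq A c := by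
  have hbdd : BddAbove ((fun r => exp (-(c * r ^ 2))) '' essDistSet A) :=
    ⟨1, by rintro _ ⟨r, -, rfl⟩; exact exp_le_one_iff.2 (by nlinarith [sq_nonneg r])⟩
  have hle (t : ℝ) (ht : D < t) : exp (-(c * t)) ≤ expNegDistSq A c := by
    have ht0 : 0 ≤ t := hD.trans ht.le
    have := le_csSup hbdd ⟨√t, h _ (Real.sqrt_pos.2 (hD.trans_lt ht)) (by rwa [Real.sq_sqrt ht0]),
      rfl⟩
    simp only [Real.sq_sqrt ht0] at this
    exact this
  have hcont : Tendsto (fun t => exp (-(c * t))) (𝓝[>] D) (𝓝 (exp (-(c * D)))) :=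
    ((by fun_prop : Continuous fun t => exp (-(c * t))).tendsto D).mono_left nhdsWithin_le_nhds
  exact le_of_tendsto hcont (eventually_nhdsWithin_of_forall hle)

lemma le_measureReal_gauss2_compl {U : Set (ℝ × ℝ)} (hUo : IsOpen U) (hUc : Convex ℝ U)
    (hUs : ∀ x ∈ U, -x ∈ U) {ε : ℝ} (hε : 0 ≤ ε) {y : ℝ × ℝ} (hy : y ∉ U) :
    √ε * exp (-(1 + ε) / 2) / √(2 * π) * exp (-((1 + ε) / 2 * (y.1 ^ 2 + y.2 ^ 2)))
      ≤ gauss2.real Uᶜ := by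
  obtain ⟨a, b, s, hab, hs, hsy, hsub⟩ := exists_halfPlane_subset_compl hUo hUc hUs hy
  calc √ε * exp (-(1 + ε) / 2) / √(2 * π) * exp (-((1 + ε) / 2 * (y.1 ^ 2 + y.2 ^ 2)))
      ≤ √ε * exp (-(1 + ε) / 2) / √(2 * π) * exp (-((1 + ε) / 2 * s ^ 2)) := by
        gcongr
    _ ≤ (gaussianReal 0 1).real (Ici s) := le_measureReal_gaussianReal_Ici hs hε
    _ = gauss2.real {p | s ≤ a * p.1 + b * p.2} := by
        rw [measureReal_def, measureReal_def, gauss2_setOf_le_linear hab]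
    _ ≤ gauss2.real Uᶜ := measureReal_mono hsub

lemma mem_essDistSet_compl {U : Set (ℝ × ℝ)} (hUo : IsOpen U) (hUc : Convex ℝ U)
    (hUs : ∀ x ∈ U, -x ∈ U) {y : ℝ × ℝ} (hy : y ∉ U) {r : ℝ} (hr : 0 < r)
    (hyr : y.1 ^ 2 + y.2 ^ 2 < r ^ 2) : r ∈ essDistSet Uᶜ := by
  obtain ⟨a, b, s, hab, -, hsy, hsub⟩ := exists_halfPlane_subset_compl hUo hUc hUs hy
  exact ⟨hr, circFrac_pos_of_halfPlane_subset hab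
    (lt_of_pow_lt_pow_left₀ 2 hr.le (hsy.trans_lt hyr)) hsub⟩

lemma mul_expNegDistSq_le_measureReal_gauss2_compl {U : Set (ℝ × ℝ)} (hUo : IsOpen U)
    (hUc : Convex ℝ U) (hUs : ∀ x ∈ U, -x ∈ U) {ε : ℝ} (hε : 0 < ε) (hε3 : ε < 1 / 3) :
    exp (-2 / 3) / √(2 * π) * √ε * expNegDistSq Uᶜ ((1 + ε) / 2) ≤ gauss2.real Uᶜ := by
  have hk : 0 < exp (-2 / 3) / √(2 * π) * √ε := by positivity
  rw [← le_div_iff₀' hk]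
  refine expNegDistSq_le (by positivity) fun y hy => (le_div_iff₀' hk).2 ?_
  calc exp (-2 / 3) / √(2 * π) * √ε * exp (-((1 + ε) / 2 * (y.1 ^ 2 + y.2 ^ 2)))
      = √ε * exp (-2 / 3) / √(2 * π) * exp (-((1 + ε) / 2 * (y.1 ^ 2 + y.2 ^ 2))) := by ring
    _ ≤ √ε * exp (-(1 + ε) / 2) / √(2 * π) * exp (-((1 + ε) / 2 * (y.1 ^ 2 + y.2 ^ 2))) := by
        gcongr √ε * exp ?_ / _ * _
        linarith
    _ ≤ gauss2.real Uᶜ := le_measureReal_gauss2_compl hUo hUc hUs hε.le hy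

lemma measureReal_gauss2_compl_le_expNegDistSq {U : Set (ℝ × ℝ)} (hUo : IsOpen U)
    (hUc : Convex ℝ U) (hUs : ∀ x ∈ U, -x ∈ U) :
    gauss2.real Uᶜ ≤ expNegDistSq Uᶜ (1 / 2) := by
  rcases Uᶜ.eq_empty_or_nonempty with hK | hK
  · rw [hK, measureReal_empty]
    exact Real.sSup_nonneg (by rintro _ ⟨r, -, rfl⟩; positivity)
  set sqNorms := (fun p : ℝ × ℝ => p.1 ^ 2 + p.2 ^ 2) '' Uᶜ
  have hbdd : BddBelow sqNorms := ⟨0, by rintro _ ⟨p, -, rfl⟩; positivity⟩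
  have hD : 0 ≤ sInf sqNorms := Real.sInf_nonneg (by rintro _ ⟨p, -, rfl⟩; positivity)
  calc gauss2.real Uᶜ ≤ gauss2.real {p | sInf sqNorms ≤ p.1 ^ 2 + p.2 ^ 2} :=
        measureReal_mono fun p hp => csInf_le hbdd ⟨p, hp, rfl⟩
    _ = exp (-(1 / 2 * sInf sqNorms)) := by
        rw [measureReal_gauss2_setOf_le_sq_add_sq hD]
        ring_nf
    _ ≤ expNegDistSq Uᶜ (1 / 2) := exp_le_expNegDistSq (by norm_num) hD fun r hr hDr => by
        obtain ⟨_, ⟨y, hy, rfl⟩, hyr⟩ := exists_lt_of_csInf_lt (hK.image _) hDr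
        exact mem_essDistSet_compl hUo hUc hUs hy hr hyr

/-- There is a universal constant `c > 0` such that for every `K ⊆ ℝ²` that is the complement
of an open convex origin-symmetric set, and every `0 < ε < 1/3`,
`c · ε^{1/2} · e^{-(1+ε)Δ_K²/2} ≤ 𝒢(K) ≤ e^{-Δ_K²/2}`, where `Δ_K = inf {r > 0 : μ_K(r) > 0}`. -/
theorem gaussian_measure_complement_convex :
    ∃ c : ℝ, 0 < c ∧
      ∀ K U : Set (ℝ × ℝ), IsOpen U → Convex ℝ U → (∀ x ∈ U, -x ∈ U) → K = Uᶜ →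
        ∀ ε : ℝ, 0 < ε → ε < 1 / 3 →
          c * Real.sqrt ε * expNegDistSq K ((1 + ε) / 2) ≤ (gauss2 K).toReal ∧
            (gauss2 K).toReal ≤ expNegDistSq K (1 / 2) := by
  refine ⟨exp (-2 / 3) / √(2 * π), by positivity, ?_⟩
  rintro K U hUo hUc hUs rfl ε hε hε3
  exact ⟨mul_expNegDistSq_le_measureReal_gauss2_compl hUo hUc hUs hε hε3,
    measureReal_gauss2_compl_le_expNegDistSq hUo hUc hUs⟩
end
end

section
/- Let 0 < τ < √2, α = 1 − τ²/2, β = √(τ² − τ⁴/4), and define I(η) = Pr_{X,Y ~ N(0,1), independent}[X ≥ η and αX + βY ≥ η]. Then I is differentiable and for every η ∈ ℝ: I′(η) = −√(2/π) · e^{−η²/2} · Φ_c( (1 − α)·η / β ). -/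
open MeasureTheory ProbabilityTheory Real

noncomputable section

/-- `Φ_c(η) = Pr_{X ~ N(0,1)}[X ≥ η]`. -/
def gaussTail (η : ℝ) : ℝ := (gaussianReal 0 1 (Set.Ici η)).toReal

/-- `I(η) = Pr[X ≥ η ∧ αX + βY ≥ η]` for independent standard Gaussians `X, Y`. -/
def jointTail (α β η : ℝ) : ℝ :=
  (((gaussianReal 0 1).prod (gaussianReal 0 1))
      {z : ℝ × ℝ | η ≤ z.1 ∧ η ≤ α * z.1 + β * z.2}).toReal

/-!
Conditioning on `X` and substituting `X = η + s` gives
`I(η) = ∫_{s > 0} Φ_c((η - α(η + s))/β) φ(η + s) ds`, an integral over a fixed domain that may be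
differentiated under the integral sign, the Gaussian factor providing the domination.
When `α² + β² = 1` we have `φ((η - αx)/β) φ(x) = φ(η) φ((x - αη)/β)`, and this makes the
`η`-derivative of the integrand equal to the `s`-derivative of
`A(s) = Φ_c((η - αx)/β) φ(x) + φ(η) Φ_c((x - αη)/β)` at `x = η + s`. As `A` vanishes at infinity,
`I'(η) = -A(0) = -2 φ(η) Φ_c((1 - α)η/β)`.
-/

open Set Filter Topology

local notation "φ" => gaussianPDFReal 0 1

lemma hasDerivAt_setIntegral_Ici {f : ℝ → ℝ} (hf : Continuous f) (hfi : Integrable f) (x : ℝ) :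
    HasDerivAt (fun y => ∫ t in Ici y, f t) (-f x) x := by
  have h (y : ℝ) : ∫ t in Ici y, f t = (∫ t in Ici 0, f t) - ∫ t in (0 : ℝ)..y, f t := by
    rw [← intervalIntegral.integral_Ici_sub_Ici' hfi.integrableOn hfi.integrableOn, sub_sub_cancel]
  rw [funext h]
  exact (hf.integral_hasStrictDerivAt 0 x).hasDerivAt.const_sub (∫ t in Ici 0, f t)

lemma tendsto_measure_Ici_atTop {α : Type*} [LinearOrder α] [NoMaxOrder α] [TopologicalSpace α]
    [OrderClosedTopology α] [MeasurableSpace α] [OpensMeasurableSpace α]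
    [(atTop : Filter α).IsCountablyGenerated] (μ : Measure α) [IsFiniteMeasure μ] :
    Tendsto (fun x => μ (Ici x)) atTop (𝓝 0) := by
  rcases isEmpty_or_nonempty α with _ | _
  · simp [filter_eq_bot_of_isEmpty atTop]
  have h := tendsto_measure_iInter_atTop (μ := μ) (fun _ => measurableSet_Ici.nullMeasurableSet)
    (antitone_Ici (α := α)) ⟨Classical.arbitrary α, measure_ne_top _ _⟩
  have hempty : ⋂ x : α, Ici x = ∅ := by
    ext x
    simpa using exists_gt x
  rwa [hempty, measure_empty] at h

lemma integrable_add_abs_mul_exp_neg_mul_sq (c : ℝ) {b : ℝ} (hb : 0 < b) :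
    Integrable fun t : ℝ => (c + |t|) * exp (-b * t ^ 2) := by
  refine (((integrable_exp_neg_mul_sq hb).const_mul c).add
    (integrable_mul_exp_neg_mul_sq hb).norm).congr (ae_of_all _ fun t => ?_)
  simp only [Pi.add_apply, norm_mul, Real.norm_eq_abs, abs_of_pos (exp_pos _)]
  ring

lemma setIntegral_gaussianReal_eq_setIntegral_smul {E : Type*} [NormedAddCommGroup E]
    [NormedSpace ℝ E] {μ : ℝ} {v : NNReal} {f : ℝ → E} {s : Set ℝ} (hv : v ≠ 0)
    (hs : MeasurableSet s) :
    ∫ x in s, f x ∂gaussianReal μ v = ∫ x in s, gaussianPDFReal μ v x • f x := by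
  rw [gaussianReal_of_var_ne_zero _ hv, setIntegral_withDensity_eq_setIntegral_toReal_smul
    (measurable_gaussianPDF _ _) (ae_of_all _ fun _ => gaussianPDF_lt_top) _ hs]
  simp only [toReal_gaussianPDF]

lemma gaussianPDFReal_zero_one_apply (t : ℝ) : φ t = (√(2 * π))⁻¹ * exp (-t ^ 2 / 2) := by
  simp [gaussianPDFReal]

lemma hasDerivAt_gaussianPDFReal_zero_one (t : ℝ) : HasDerivAt φ (-t * φ t) t := by
  have h := ((hasDerivAt_id t).pow 2).neg.div_const 2
  simp only [Pi.neg_apply, Pi.pow_apply, id_eq, Nat.cast_ofNat, Nat.add_one_sub_one, pow_one,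
    mul_one] at h
  rw [funext gaussianPDFReal_zero_one_apply]
  exact (h.exp.const_mul _).congr_deriv (by ring)

@[fun_prop]
lemma continuous_gaussianPDFReal_zero_one : Continuous φ :=
  continuous_iff_continuousAt.2 fun t => (hasDerivAt_gaussianPDFReal_zero_one t).continuousAt

lemma gaussianPDFReal_zero_one_le_exp (t : ℝ) : φ t ≤ exp (-t ^ 2 / 2) := by
  rw [gaussianPDFReal_zero_one_apply]
  refine mul_le_of_le_one_left (exp_nonneg _) (inv_le_one_of_one_le₀ ?_)
  rw [one_le_sqrt]
  nlinarith [pi_gt_three]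

lemma gaussianPDFReal_zero_one_le_one (t : ℝ) : φ t ≤ 1 :=
  (gaussianPDFReal_zero_one_le_exp t).trans (exp_le_one_iff.2 (by nlinarith [sq_nonneg t]))

lemma gaussianPDFReal_zero_one_le_of_abs_sub_le {y t : ℝ} (h : |y - t| ≤ 1) :
    φ y ≤ exp (1 / 2) * exp (-(1 / 4) * t ^ 2) := by
  refine (gaussianPDFReal_zero_one_le_exp y).trans ?_
  rw [← exp_add, exp_le_exp]
  obtain ⟨h₁, h₂⟩ := abs_le.1 h
  -- `t² ≤ 2y² + 2(t - y)²`
  nlinarith [sq_nonneg (t - 2 * y), mul_nonneg (sub_nonneg.2 h₁) (sub_nonneg.2 h₂)]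

lemma tendsto_gaussianPDFReal_zero_one_atTop : Tendsto φ atTop (𝓝 0) := by
  have h : Tendsto (fun t : ℝ => -t ^ 2 / 2) atTop atBot :=
    (tendsto_neg_atTop_atBot.comp (tendsto_pow_atTop two_ne_zero)).atBot_div_const two_pos
  simpa [funext gaussianPDFReal_zero_one_apply] using
    (tendsto_exp_atBot.comp h).const_mul (√(2 * π))⁻¹

lemma gaussTail_eq_setIntegral (η : ℝ) : gaussTail η = ∫ t in Ici η, φ t := by
  rw [gaussTail, gaussianReal_apply_eq_integral 0 one_ne_zero,
    ENNReal.toReal_ofReal (integral_nonneg (gaussianPDFReal_nonneg 0 1))]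

lemma hasDerivAt_gaussTail (η : ℝ) : HasDerivAt gaussTail (-φ η) η := by
  rw [funext gaussTail_eq_setIntegral]
  exact hasDerivAt_setIntegral_Ici continuous_gaussianPDFReal_zero_one
    (integrable_gaussianPDFReal 0 1) η

@[fun_prop]
lemma continuous_gaussTail : Continuous gaussTail :=
  continuous_iff_continuousAt.2 fun η => (hasDerivAt_gaussTail η).continuousAt

lemma gaussTail_nonneg (η : ℝ) : 0 ≤ gaussTail η := ENNReal.toReal_nonneg

lemma gaussTail_le_one (η : ℝ) : gaussTail η ≤ 1 := measureReal_le_one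

lemma tendsto_gaussTail_atTop : Tendsto gaussTail atTop (𝓝 0) :=
  (ENNReal.tendsto_toReal ENNReal.zero_ne_top).comp (tendsto_measure_Ici_atTop (gaussianReal 0 1))

section JointTail

variable {α β : ℝ}

lemma jointTail_eq_setIntegral_gaussianReal (hβ : 0 < β) (η : ℝ) :
    jointTail α β η = ∫ x in Ici η, gaussTail ((η - α * x) / β) ∂gaussianReal 0 1 := by
  set μ := gaussianReal 0 1
  set S := {z : ℝ × ℝ | η ≤ z.1 ∧ η ≤ α * z.1 + β * z.2}
  have hS : MeasurableSet S :=
    (measurableSet_le measurable_const measurable_fst).inter (measurableSet_le measurable_const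
      ((measurable_fst.const_mul α).add (measurable_snd.const_mul β)))
  have hslice (x : ℝ) :
      μ (Prod.mk x ⁻¹' S) = (Ici η).indicator (fun x => μ (Ici ((η - α * x) / β))) x := by
    by_cases hx : η ≤ x
    · rw [indicator_of_mem (mem_Ici.2 hx)]
      congr 1
      ext y
      simp only [S, mem_preimage, mem_ofPred_eq, mem_Ici, hx, true_and, div_le_iff₀ hβ]
      constructor <;> intro <;> linarith
    · simp [S, hx]
  have hmeas : Measurable fun x => μ (Ici ((η - α * x) / β)) :=
    (Antitone.measurable fun a b hab => measure_mono (Ici_subset_Ici.2 hab)).comp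
      (by fun_prop : Measurable fun x : ℝ => (η - α * x) / β)
  rw [jointTail, Measure.prod_apply hS, lintegral_congr hslice,
    lintegral_indicator measurableSet_Ici, ← integral_toReal hmeas.aemeasurable
      (ae_of_all _ fun _ => measure_lt_top _ _)]
  rfl

def jointTailIntegrand (α β η s : ℝ) : ℝ := gaussTail ((η - α * (η + s)) / β) * φ (η + s)

lemma jointTail_eq_setIntegral (hβ : 0 < β) (η : ℝ) :
    jointTail α β η = ∫ s in Ioi 0, jointTailIntegrand α β η s := by
  have hpre : (η + ·) ⁻¹' Ici η = Ici 0 := by simp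
  rw [jointTail_eq_setIntegral_gaussianReal hβ,
    setIntegral_gaussianReal_eq_setIntegral_smul one_ne_zero measurableSet_Ici,
    ← integral_Ici_eq_integral_Ioi, ← hpre,
    ← (measurePreserving_add_left volume η).setIntegral_preimage_emb
      (measurableEmbedding_addLeft η)]
  simp only [jointTailIntegrand, smul_eq_mul, mul_comm]

lemma jointTailIntegrand_nonneg (η s : ℝ) : 0 ≤ jointTailIntegrand α β η s :=
  mul_nonneg (gaussTail_nonneg _) (gaussianPDFReal_nonneg 0 1 _)

lemma jointTailIntegrand_le (η s : ℝ) : jointTailIntegrand α β η s ≤ φ (η + s) :=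
  mul_le_of_le_one_left (gaussianPDFReal_nonneg 0 1 _) (gaussTail_le_one _)

def jointTailIntegrandDeriv (α β η s : ℝ) : ℝ :=
  -((1 - α) / β * φ ((η - α * (η + s)) / β) * φ (η + s)) - (η + s) * jointTailIntegrand α β η s

lemma hasDerivAt_jointTailIntegrand (η s : ℝ) :
    HasDerivAt (jointTailIntegrand α β · s) (jointTailIntegrandDeriv α β η s) η := by
  have hu : HasDerivAt (fun η => (η - α * (η + s)) / β) ((1 - α) / β) η :=
    (((hasDerivAt_id η).sub (((hasDerivAt_id η).add_const s).const_mul α)).div_const β).congr_deriv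
      (by ring)
  have hx : HasDerivAt (fun η => η + s) 1 η := (hasDerivAt_id η).add_const s
  refine (((hasDerivAt_gaussTail _).comp η hu).mul
    ((hasDerivAt_gaussianPDFReal_zero_one _).comp η hx)).congr_deriv ?_
  simp only [jointTailIntegrandDeriv, jointTailIntegrand, Function.comp_apply]
  ring

lemma abs_jointTailIntegrandDeriv_le (η s : ℝ) :
    |jointTailIntegrandDeriv α β η s| ≤ (|(1 - α) / β| + |η + s|) * φ (η + s) := by
  have hφ := gaussianPDFReal_nonneg 0 1 (η + s)
  have h₁ : |(1 - α) / β * φ ((η - α * (η + s)) / β) * φ (η + s)| ≤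
      |(1 - α) / β| * φ (η + s) := by
    rw [abs_mul, abs_mul, abs_of_nonneg (gaussianPDFReal_nonneg 0 1 _), abs_of_nonneg hφ]
    calc _ ≤ |(1 - α) / β| * 1 * φ (η + s) := by
          gcongr
          exact gaussianPDFReal_zero_one_le_one _
      _ = _ := by ring
  have h₂ : |(η + s) * jointTailIntegrand α β η s| ≤ |η + s| * φ (η + s) := by
    rw [abs_mul, abs_of_nonneg (jointTailIntegrand_nonneg η s)]
    gcongr
    exact jointTailIntegrand_le η s
  calc |jointTailIntegrandDeriv α β η s|
      ≤ |(1 - α) / β * φ ((η - α * (η + s)) / β) * φ (η + s)|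
        + |(η + s) * jointTailIntegrand α β η s| := by
        rw [jointTailIntegrandDeriv, ← abs_neg ((1 - α) / β * _ * _)]
        exact abs_sub _ _
    _ ≤ (|(1 - α) / β| + |η + s|) * φ (η + s) := by linarith

lemma norm_jointTailIntegrandDeriv_le_of_mem_ball {η η' : ℝ} (hη' : η' ∈ Metric.ball η 1)
    (s : ℝ) : ‖jointTailIntegrandDeriv α β η' s‖ ≤
      exp (1 / 2) * ((|(1 - α) / β| + 1 + |η + s|) * exp (-(1 / 4) * (η + s) ^ 2)) := by
  have hd : |(η' + s) - (η + s)| ≤ 1 := by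
    rw [add_sub_add_right_eq_sub]
    exact (Metric.mem_ball.1 hη').le
  calc ‖jointTailIntegrandDeriv α β η' s‖ ≤ (|(1 - α) / β| + |η' + s|) * φ (η' + s) :=
        abs_jointTailIntegrandDeriv_le η' s
    _ ≤ (|(1 - α) / β| + 1 + |η + s|) * (exp (1 / 2) * exp (-(1 / 4) * (η + s) ^ 2)) := by
        refine mul_le_mul ?_ (gaussianPDFReal_zero_one_le_of_abs_sub_le hd)
          (gaussianPDFReal_nonneg 0 1 _) (by positivity)
        linarith [abs_sub_abs_le_abs_sub (η' + s) (η + s)]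
    _ = _ := by ring

lemma hasDerivAt_setIntegral_jointTailIntegrand (η : ℝ) :
    IntegrableOn (jointTailIntegrandDeriv α β η) (Ioi 0) ∧
      HasDerivAt (fun η => ∫ s in Ioi 0, jointTailIntegrand α β η s)
        (∫ s in Ioi 0, jointTailIntegrandDeriv α β η s) η := by
  have hF_int : IntegrableOn (jointTailIntegrand α β η) (Ioi 0) :=
    ((integrable_gaussianPDFReal 0 1).comp_add_left η).integrableOn.mono'
      (by unfold jointTailIntegrand; fun_prop) (ae_of_all _ fun s => by
        rw [Real.norm_of_nonneg (jointTailIntegrand_nonneg η s)]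
        exact jointTailIntegrand_le η s)
  have hbound_int := ((integrable_add_abs_mul_exp_neg_mul_sq (|(1 - α) / β| + 1)
    (by norm_num : (0 : ℝ) < 1 / 4)).comp_add_left η).const_mul (exp (1 / 2))
  exact hasDerivAt_integral_of_dominated_loc_of_deriv_le (Metric.ball_mem_nhds η one_pos)
    (Eventually.of_forall fun η' => by unfold jointTailIntegrand; fun_prop) hF_int
    (by unfold jointTailIntegrandDeriv jointTailIntegrand; fun_prop)
    (ae_of_all _ fun s η' hη' => norm_jointTailIntegrandDeriv_le_of_mem_ball hη' s)
    hbound_int.integrableOn (ae_of_all _ fun s η' _ => hasDerivAt_jointTailIntegrand η' s)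

lemma gaussianPDFReal_mul_gaussianPDFReal_rotate (hαβ : α ^ 2 + β ^ 2 = 1) (hβ : β ≠ 0)
    (η x : ℝ) : φ ((η - α * x) / β) * φ x = φ η * φ ((x - α * η) / β) := by
  simp only [gaussianPDFReal_zero_one_apply]
  rw [mul_mul_mul_comm, ← exp_add, mul_mul_mul_comm, ← exp_add]
  -- both exponents equal `-(η² - 2αηx + x²) / (2β²)`
  congr 2
  field_simp
  linear_combination (η ^ 2 - x ^ 2) * hαβ

def jointTailAntideriv (α β η s : ℝ) : ℝ :=
  jointTailIntegrand α β η s + φ η * gaussTail ((η + s - α * η) / β)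

lemma hasDerivAt_jointTailAntideriv (hαβ : α ^ 2 + β ^ 2 = 1) (hβ : β ≠ 0) (η s : ℝ) :
    HasDerivAt (jointTailAntideriv α β η) (jointTailIntegrandDeriv α β η s) s := by
  have hu : HasDerivAt (fun s => (η - α * (η + s)) / β) (-α / β) s :=
    ((((hasDerivAt_id s).const_add η).const_mul α).const_sub η |>.div_const β).congr_deriv
      (by ring)
  have hv : HasDerivAt (fun s => (η + s - α * η) / β) (1 / β) s :=
    (((hasDerivAt_id s).const_add η).sub_const (α * η)).div_const β
  have hx : HasDerivAt (fun s => η + s) 1 s := (hasDerivAt_id s).const_add η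
  refine ((((hasDerivAt_gaussTail _).comp s hu).mul
    ((hasDerivAt_gaussianPDFReal_zero_one _).comp s hx)).add
    (((hasDerivAt_gaussTail _).comp s hv).const_mul (φ η))).congr_deriv ?_
  have hrot := gaussianPDFReal_mul_gaussianPDFReal_rotate hαβ hβ η (η + s)
  simp only [jointTailIntegrandDeriv, jointTailIntegrand, Function.comp_apply]
  linear_combination (1 / β) * hrot

lemma tendsto_jointTailAntideriv_atTop (hβ : 0 < β) (η : ℝ) :
    Tendsto (jointTailAntideriv α β η) atTop (𝓝 0) := by
  have h₁ : Tendsto (jointTailIntegrand α β η) atTop (𝓝 0) :=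
    squeeze_zero (jointTailIntegrand_nonneg η) (jointTailIntegrand_le η)
      (tendsto_gaussianPDFReal_zero_one_atTop.comp (tendsto_atTop_add_const_left _ η tendsto_id))
  have h₂ : Tendsto (fun s => (η + s - α * η) / β) atTop atTop :=
    ((tendsto_atTop_add_const_right atTop (η - α * η) tendsto_id).congr
      fun s => by rw [id]; ring).atTop_div_const hβ
  have h := h₁.add ((tendsto_gaussTail_atTop.comp h₂).const_mul (φ η))
  rw [mul_zero, add_zero] at h
  exact h

lemma setIntegral_jointTailIntegrandDeriv (hβ : 0 < β) (hαβ : α ^ 2 + β ^ 2 = 1) (η : ℝ)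
    (hint : IntegrableOn (jointTailIntegrandDeriv α β η) (Ioi 0)) :
    ∫ s in Ioi 0, jointTailIntegrandDeriv α β η s = -(2 * φ η * gaussTail ((1 - α) * η / β)) := by
  rw [integral_Ioi_of_hasDerivAt_of_tendsto'
    (fun s _ => hasDerivAt_jointTailAntideriv hαβ hβ.ne' η s) hint
    (tendsto_jointTailAntideriv_atTop hβ η)]
  simp only [jointTailAntideriv, jointTailIntegrand, add_zero]
  ring_nf

theorem hasDerivAt_jointTail (hβ : 0 < β) (hαβ : α ^ 2 + β ^ 2 = 1) (η : ℝ) :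
    HasDerivAt (jointTail α β) (-(2 * φ η * gaussTail ((1 - α) * η / β))) η := by
  obtain ⟨hint, hderiv⟩ := hasDerivAt_setIntegral_jointTailIntegrand (α := α) (β := β) η
  rw [funext (jointTail_eq_setIntegral hβ), ← setIntegral_jointTailIntegrandDeriv hβ hαβ η hint]
  exact hderiv

end JointTail

/-- For `0 < τ < √2`, `α = 1 - τ²/2`, `β = √(τ² - τ⁴/4)`, the function
`I(η) = Pr[X ≥ η ∧ αX + βY ≥ η]` is differentiable with
`I′(η) = -√(2/π) · e^{-η²/2} · Φ_c((1-α)η/β)`. -/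
theorem jointTail_hasDerivAt (τ α β : ℝ) (hτ0 : 0 < τ) (hτ : τ < Real.sqrt 2)
    (hα : α = 1 - τ ^ 2 / 2) (hβ : β = Real.sqrt (τ ^ 2 - τ ^ 4 / 4)) (η : ℝ) :
    HasDerivAt (jointTail α β)
      (-(Real.sqrt (2 / π) * Real.exp (-η ^ 2 / 2) * gaussTail ((1 - α) * η / β))) η := by
  have hτ2 : τ ^ 2 < 2 := by
    simpa using pow_lt_pow_left₀ hτ hτ0.le two_ne_zero
  have hpos : 0 < τ ^ 2 - τ ^ 4 / 4 := by nlinarith [pow_pos hτ0 2]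
  have hβ0 : 0 < β := hβ ▸ sqrt_pos.2 hpos
  have hαβ : α ^ 2 + β ^ 2 = 1 := by
    rw [hβ, sq_sqrt hpos.le, hα]
    ring
  have hsqrt : √(2 / π) = 2 * (√(2 * π))⁻¹ := by
    rw [show (2 : ℝ) / π = 2 ^ 2 / (2 * π) by field_simp, sqrt_div' _ (by positivity),
      sqrt_sq zero_le_two, div_eq_mul_inv]
  convert hasDerivAt_jointTail hβ0 hαβ η using 1
  rw [gaussianPDFReal_zero_one_apply, hsqrt]
  ring
end
end
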